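/- Matrix Yoneda embedding: let Φ : Aᵒᵖ × B ⥤ Type be a profunctor with induced monad T = Φ_* ∘ Φ^* on presheaves Aᵒᵖ ⥤ Type. For all objects a of A and b of B there is a bijection, natural in a and b, between T-algebra morphisms from the free T-algebra ∇_Φ a on yoneda.obj a to the T-algebra Φ_*(Hom_B(b, −)) (the image under Φ_* of the representable postsheaf, with structure map Φ_*(ε)), and the set Φ(a, b). -/

import Mathlib

open CategoryTheory CategoryTheory.Limits Opposite

universe u

namespace DMCat

variable {A B : Type u} [SmallCategory A] [SmallCategory B]

/-- The presheaf `Φ(-, b)` associated to a profunctor `Φ : Aᵒᵖ × B ⥤ Type u`. -/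
def curryR (Φ : Aᵒᵖ × B ⥤ Type u) (b : B) : Aᵒᵖ ⥤ Type u :=
  (CategoryTheory.Functor.curry.obj Φ).flip.obj b

/-- The postsheaf `Φ(a, -)` associated to a profunctor `Φ : Aᵒᵖ × B ⥤ Type u`. -/
def curryL (Φ : Aᵒᵖ × B ⥤ Type u) (a : Aᵒᵖ) : B ⥤ Type u :=
  (CategoryTheory.Functor.curry.obj Φ).obj a

/-- The left extension `Φ^* : (Aᵒᵖ ⥤ Type u) ⥤ (B ⥤ Type u)ᵒᵖ`,
`(Φ^* α)(b) = Nat(α, Φ(-, b))`. -/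
def upper (Φ : Aᵒᵖ × B ⥤ Type u) : (Aᵒᵖ ⥤ Type u) ⥤ (B ⥤ Type u)ᵒᵖ where
  obj α := op
    { obj := fun b => α ⟶ curryR Φ b
      map := fun {b b'} g => TypeCat.ofHom fun t => t ≫ (CategoryTheory.Functor.curry.obj Φ).flip.map g
      map_id := by
        intro b
        apply ConcreteCategory.hom_ext; intro t
        simp [curryR]; rfl
      map_comp := by
        intro b b' b'' g g'
        apply ConcreteCategory.hom_ext; intro t
        exact (congrArg (t ≫ ·) ((CategoryTheory.Functor.curry.obj Φ).flip.map_comp g g')).trans (Category.assoc _ _ _).symm }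
  map {α α'} f := Quiver.Hom.op
    { app := fun b => TypeCat.ofHom fun t => f ≫ t
      naturality := by intro b b' g; apply ConcreteCategory.hom_ext; intro t; exact (Category.assoc (obj := Aᵒᵖ ⥤ Type u) _ _ _).symm }
  map_id := by intro α; apply Quiver.Hom.unop_inj; ext b t; simp
  map_comp := by intro α α' α'' f f'; apply Quiver.Hom.unop_inj; ext b t; simp

/-- The right extension `Φ_* : (B ⥤ Type u)ᵒᵖ ⥤ (Aᵒᵖ ⥤ Type u)`,
`(Φ_* β)(a) = Nat(β, Φ(a, -))`. -/
def lower (Φ : Aᵒᵖ × B ⥤ Type u) : (B ⥤ Type u)ᵒᵖ ⥤ (Aᵒᵖ ⥤ Type u) where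
  obj β :=
    { obj := fun a => β.unop ⟶ curryL Φ a
      map := fun {a a'} f => TypeCat.ofHom fun t => t ≫ (CategoryTheory.Functor.curry.obj Φ).map f
      map_id := by intro a; apply ConcreteCategory.hom_ext; intro t; simp [curryL]; rfl
      map_comp := by intro a a' a'' f f'; apply ConcreteCategory.hom_ext; intro t; exact (congrArg (t ≫ ·) ((CategoryTheory.Functor.curry.obj Φ).map_comp f f')).trans (Category.assoc _ _ _).symm }
  map {β β'} f :=
    { app := fun a => TypeCat.ofHom fun t => f.unop ≫ t
      naturality := by intro a a' g; apply ConcreteCategory.hom_ext; intro t; exact (Category.assoc (obj := B ⥤ Type u) _ _ _).symm }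
  map_id := by intro β; ext a t; simp
  map_comp := by intro β β' β'' f f'; ext a t; simp

/-- The adjunction `Φ^* ⊣ Φ_*`. -/
def matrixAdj (Φ : Aᵒᵖ × B ⥤ Type u) : upper Φ ⊣ lower Φ :=
  Adjunction.mkOfHomEquiv
    { homEquiv := fun α β =>
        { toFun := fun t =>
            { app := fun a => TypeCat.ofHom fun x =>
                { app := fun b => TypeCat.ofHom fun y => ((t.unop.app b y).app a x : Φ.obj (a, b))
                  naturality := by
                    intro b b' g
                    apply ConcreteCategory.hom_ext; intro y
                    have h1 := congrArg (fun (u : α ⟶ curryR Φ b') => u.app a x) (ConcreteCategory.congr_hom (t.unop.naturality g) y)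
                    have h2 := ConcreteCategory.congr_hom ((t.unop.app b y).naturality (𝟙 a))
                    exact h1 }
              naturality := by
                intro a a' f
                apply ConcreteCategory.hom_ext; intro x
                apply NatTrans.ext
                funext b; apply ConcreteCategory.hom_ext; intro y
                have := ConcreteCategory.congr_hom ((t.unop.app b y).naturality f) x
                exact this }
          invFun := fun s => Quiver.Hom.op
            { app := fun b => TypeCat.ofHom fun y =>
                { app := fun a => TypeCat.ofHom fun x => ((s.app a x).app b y : Φ.obj (a, b))
                  naturality := by
                    intro a a' f
                    apply ConcreteCategory.hom_ext; intro x
                    have := congrArg (fun (u : β.unop ⟶ curryL Φ a') => u.app b y) (ConcreteCategory.congr_hom (s.naturality f) x)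
                    exact this }
              naturality := by
                intro b b' g
                apply ConcreteCategory.hom_ext; intro y
                apply NatTrans.ext
                funext a; apply ConcreteCategory.hom_ext; intro x
                have := ConcreteCategory.congr_hom ((s.app a x).naturality g) y
                exact this }
          left_inv := by
            intro t
            apply Quiver.Hom.unop_inj
            apply NatTrans.ext
            funext b
            apply ConcreteCategory.hom_ext; intro y
            apply NatTrans.ext
            funext a; apply ConcreteCategory.hom_ext; intro x
            rfl
          right_inv := by
            intro s
            apply NatTrans.ext
            funext a
            apply ConcreteCategory.hom_ext; intro x
            apply NatTrans.ext
            funext b; apply ConcreteCategory.hom_ext; intro y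
            rfl }
      homEquiv_naturality_left_symm := by
        intro α α' β f g
        apply Quiver.Hom.unop_inj
        apply NatTrans.ext
        funext b; apply ConcreteCategory.hom_ext; intro y
        apply NatTrans.ext
        funext a; apply ConcreteCategory.hom_ext; intro x
        rfl
      homEquiv_naturality_right := by
        intro α β β' f g
        apply NatTrans.ext
        funext a
        apply ConcreteCategory.hom_ext; intro x
        apply NatTrans.ext
        funext b; apply ConcreteCategory.hom_ext; intro y
        rfl }

end DMCat

open DMCat

/-- **Matrix Yoneda embedding.** For a profunctor `Φ : Aᵒᵖ × B ⥤ Type` with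
induced monad `T = Φ_* ∘ Φ^*`, there is a bijection, natural in `a` and `b`, between
`T`-algebra morphisms from the free algebra on `yoneda.obj a` to the algebra
`Φ_*(Hom_B(b, −))` (with structure map `Φ_*(ε)`) and the set `Φ(a, b)`. -/
theorem matrix_yoneda_embedding {A B : Type u} [SmallCategory A] [SmallCategory B]
    (Φ : Aᵒᵖ × B ⥤ Type u) :
    ∃ e : ∀ (a : A) (b : B),
        ((matrixAdj Φ).toMonad.free.obj (yoneda.obj a) ⟶
          (Monad.comparison (matrixAdj Φ)).obj (op (coyoneda.obj (op b)))) ≃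
        Φ.obj (op a, b),
      (∀ (a a' : A) (f : a' ⟶ a) (b : B)
        (h : (matrixAdj Φ).toMonad.free.obj (yoneda.obj a) ⟶
          (Monad.comparison (matrixAdj Φ)).obj (op (coyoneda.obj (op b)))),
        e a' b ((matrixAdj Φ).toMonad.free.map (yoneda.map f) ≫ h) =
          Φ.map (f.op, 𝟙 b) (e a b h)) ∧
      (∀ (a : A) (b b' : B) (g : b ⟶ b')
        (h : (matrixAdj Φ).toMonad.free.obj (yoneda.obj a) ⟶
          (Monad.comparison (matrixAdj Φ)).obj (op (coyoneda.obj (op b)))),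
        e a b' (h ≫ (Monad.comparison (matrixAdj Φ)).map
            (Quiver.Hom.op (coyoneda.map g.op))) =
          Φ.map (𝟙 (op a), g) (e a b h)) := by
  refine ⟨fun a b =>
    (((matrixAdj Φ).toMonad.adj.homEquiv (yoneda.obj a) _).trans
      (yonedaEquiv.trans coyonedaEquiv)), ?_, ?_⟩
  · intro a a' f b h
    simp only [Equiv.trans_apply, Adjunction.homEquiv_naturality_left,
      ← yonedaEquiv_naturality]
    erw [Equiv.trans_apply, Equiv.trans_apply, ← yonedaEquiv_naturality]
    rfl
  · intro a b b' g h
    simp only [Equiv.trans_apply, Adjunction.homEquiv_naturality_right,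
      yonedaEquiv_comp]
    exact (coyonedaEquiv_naturality _ g).symm
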